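/- In the quotient ring $A = \mathbb{Z}[z_{12},z_{20},z_{30}]/(2z_{30},\, 3z_{20}^2,\, 5z_{12}^4,\, z_{12}^5 + z_{20}^3 + z_{30}^2)$, the class of $z_{12}^4$ has additive order exactly $5$ and the class of $z_{20}^2$ has additive order exactly $3$. -/

import Mathlib

/-! `5 z₁₂⁴` and `3 z₂₀²` are generators of the ideal, so the orders divide the primes `5` and `3`.
Neither power lies in the ideal: sending `z₁₂ ↦ t` and `z₂₀, z₃₀ ↦ 0` maps the ideal into
`(t⁵) ⊆ 𝔽₅[t]`, and `t⁴ ∉ (t⁵)`; likewise `z₂₀ ↦ t`, `z₁₂, z₃₀ ↦ 0` maps it into `(t³) ⊆ 𝔽₃[t]`. -/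

open MvPolynomial

/-- The ideal `(2z₃₀, 3z₂₀², 5z₁₂⁴, z₁₂⁵ + z₂₀³ + z₃₀²)` in `ℤ[z₁₂,z₂₀,z₃₀]`
(`z₁₂ = X 0`, `z₂₀ = X 1`, `z₃₀ = X 2`). -/
noncomputable def I11 : Ideal (MvPolynomial (Fin 3) ℤ) :=
  Ideal.span {2 * X (2 : Fin 3), 3 * (X (1 : Fin 3)) ^ 2, 5 * (X (0 : Fin 3)) ^ 4,
    (X (0 : Fin 3)) ^ 5 + (X (1 : Fin 3)) ^ 3 + (X (2 : Fin 3)) ^ 2}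

theorem Ideal.addOrderOf_mk_eq_prime {R : Type*} [CommRing R] {I : Ideal R} {p : ℕ}
    [Fact p.Prime] {x : R} (hpx : (p : R) * x ∈ I) (hx : x ∉ I) :
    addOrderOf (Ideal.Quotient.mk I x) = p := by
  apply addOrderOf_eq_prime
  · rwa [← map_nsmul, Ideal.Quotient.eq_zero_iff_mem, nsmul_eq_mul]
  · rwa [Ne, Ideal.Quotient.eq_zero_iff_mem]

theorem Polynomial.X_pow_notMem_span_X_pow {R : Type*} [CommRing R] [Nontrivial R] {k n : ℕ}
    (hkn : k < n) : (Polynomial.X ^ k : Polynomial R) ∉ Ideal.span {Polynomial.X ^ n} := by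
  rw [Ideal.mem_span_singleton, Polynomial.X_pow_dvd_iff]
  intro h
  simpa using h k hkn

theorem MvPolynomial.X_pow_notMem_of_le_comap {σ R : Type*} [DecidableEq σ] [CommRing R]
    [Nontrivial R] {I : Ideal (MvPolynomial σ ℤ)} (i : σ) {k n : ℕ}
    (hI : I ≤ (Ideal.span {Polynomial.X ^ n}).comap
      (aeval (R := ℤ) (Pi.single i (Polynomial.X : Polynomial R)))) (hkn : k < n) :
    X i ^ k ∉ I := fun h ↦
  Polynomial.X_pow_notMem_span_X_pow hkn (by simpa using hI h)

theorem I11_le_comap_z12 : I11 ≤ (Ideal.span {Polynomial.X ^ 5}).comap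
    (aeval (R := ℤ) (Pi.single 0 (Polynomial.X : Polynomial (ZMod 5)))) := by
  rw [I11, Ideal.span_le]
  simp [Set.insert_subset_iff, CharP.ofNat_eq_zero]

theorem I11_le_comap_z20 : I11 ≤ (Ideal.span {Polynomial.X ^ 3}).comap
    (aeval (R := ℤ) (Pi.single 1 (Polynomial.X : Polynomial (ZMod 3)))) := by
  rw [I11, Ideal.span_le]
  simp [Set.insert_subset_iff, CharP.ofNat_eq_zero]

/-- In the quotient, the class of `z₁₂⁴` has additive order exactly `5` and the
class of `z₂₀²` has additive order exactly `3`. -/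
theorem stmt11 :
    addOrderOf (Ideal.Quotient.mk I11 ((X (0 : Fin 3)) ^ 4)) = 5 ∧
    addOrderOf (Ideal.Quotient.mk I11 ((X (1 : Fin 3)) ^ 2)) = 3 := by
  have : Fact (Nat.Prime 5) := ⟨by norm_num⟩
  exact ⟨Ideal.addOrderOf_mk_eq_prime (Ideal.subset_span (by simp))
      (X_pow_notMem_of_le_comap 0 I11_le_comap_z12 (by norm_num)),
    Ideal.addOrderOf_mk_eq_prime (Ideal.subset_span (by simp))
      (X_pow_notMem_of_le_comap 1 I11_le_comap_z20 (by norm_num))⟩
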